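/- Let k be a field and n ≥ 3 an integer, and let Aₙ be the quotient of the free associative unital k-algebra on x₁,…,xₙ by the two-sided ideal generated by [[x_i, x_{i+2}], x_{i+1}], i = 1,…,n−2. Set p_{i,i} = x_{i+2} x_{i+1}, p_{i,i+1} = x_{i+2} x_i − x_i x_{i+2}, p_{i,i+2} = −x_i x_{i+1}, and p_{ij} = 0 for other j. If elements a₁,…,aₙ ∈ Aₙ satisfy Σ_{j=1}^n x̄_j a_j = 0 in Aₙ, then there exist b₁,…,b_{n−2} ∈ Aₙ such that a_j = Σ_{i=1}^{n−2} p̄_{ij} b_i for every j = 1,…,n. -/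

import Mathlib

/-
Lift the `aⱼ` to `cⱼ ∈ F`, so that `t = Σ xⱼ cⱼ` maps to `0` in `Aₙ`. Call `t ∈ F` represented if
`t̄ = 0` and `t = Σ xⱼ c'ⱼ` with `(c̄'ⱼ)ⱼ` in the right `Aₙ`-span of the rows `(p̄ᵢⱼ)ⱼ`. The
represented elements form a two-sided ideal: right multiplication acts on the coefficients, and
for `xₘ t` one may take `c' = t` in slot `m`, whose image vanishes because `t̄ = 0`. This ideal
contains the relators `[[xᵢ, xᵢ₊₂], xᵢ₊₁] = Σ xⱼ pᵢⱼ`, hence the whole kernel of `F → Aₙ`. Finally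
the coefficients of `Σ xⱼ cⱼ` are unique in `F` (look at words beginning with `xⱼ`), so `c = c'`.
-/

open scoped BigOperators

noncomputable section

universe u

/-- The generator index `i + t` (0-based): for the `i`-th relation (`i = 0,…,n-3`),
the letters involved are `x_i, x_{i+1}, x_{i+2}`. -/
def genIdx (n : ℕ) (i : Fin (n - 2)) (t : Fin 3) : Fin n :=
  ⟨i.val + t.val, by have hi := i.isLt; have ht := t.isLt; omega⟩

/-- The relation `[[x_i, x_{i+2}], x_{i+1}] =
x_i x_{i+2} x_{i+1} − x_{i+2} x_i x_{i+1} − x_{i+1} x_i x_{i+2} + x_{i+1} x_{i+2} x_i`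
(written 0-based) in the free associative unital algebra `F = k⟨x_1,…,x_n⟩`. -/
def lieRel (k : Type) [Field k] (n : ℕ) (i : Fin (n - 2)) : FreeAlgebra k (Fin n) :=
  let X : Fin 3 → FreeAlgebra k (Fin n) := fun t => FreeAlgebra.ι k (genIdx n i t)
  X 0 * X 2 * X 1 - X 2 * X 0 * X 1 - X 1 * X 0 * X 2 + X 1 * X 2 * X 0

/-- The relation identifying each `[[x_i, x_{i+2}], x_{i+1}]` with `0`; quotienting the free
algebra by (the ring congruence generated by) this relation is exactly quotienting by the
two-sided ideal generated by these elements. -/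
def lieRelRel (k : Type) [Field k] (n : ℕ) (a b : FreeAlgebra k (Fin n)) : Prop :=
  b = 0 ∧ ∃ i : Fin (n - 2), a = lieRel k n i

/-- The algebra `Aₙ = k⟨x_1,…,x_n⟩ / ([[x_i, x_{i+2}], x_{i+1}], i = 1,…,n-2)`. -/
abbrev AnAlg (k : Type) [Field k] (n : ℕ) : Type :=
  RingQuot (lieRelRel k n)

/-- The image `x̄_j` of the generator `x_j` in `Aₙ`. -/
def XbarL (k : Type) [Field k] (n : ℕ) (j : Fin n) : AnAlg k n :=
  RingQuot.mkAlgHom k (lieRelRel k n) (FreeAlgebra.ι k j)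

/-- The elements `p_{ij}` of the free algebra: `p_{i,i} = x_{i+2} x_{i+1}`,
`p_{i,i+1} = x_{i+2} x_i − x_i x_{i+2}`, `p_{i,i+2} = −x_i x_{i+1}`, and `p_{ij} = 0`
otherwise, so that `[[x_i, x_{i+2}], x_{i+1}] = Σ_j x_j p_{ij}`. -/
def pLie (k : Type) [Field k] (n : ℕ) (i : Fin (n - 2)) (j : Fin n) :
    FreeAlgebra k (Fin n) :=
  let X : Fin 3 → FreeAlgebra k (Fin n) := fun t => FreeAlgebra.ι k (genIdx n i t)
  if j = genIdx n i 0 then X 2 * X 1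
  else if j = genIdx n i 1 then X 2 * X 0 - X 0 * X 2
  else if j = genIdx n i 2 then -(X 0 * X 1)
  else 0

/-- The image `p̄_{ij}` of `p_{ij}` in `Aₙ`. -/
def PbarL (k : Type) [Field k] (n : ℕ) (i : Fin (n - 2)) (j : Fin n) : AnAlg k n :=
  RingQuot.mkAlgHom k (lieRelRel k n) (pLie k n i j)

/-- The augmentation `ε : Aₙ → k`, the unique `k`-algebra map sending every `x̄_j` to `0`. -/
def augL (k : Type) [Field k] (n : ℕ) : AnAlg k n →ₐ[k] k :=
  RingQuot.liftAlgHom k ⟨FreeAlgebra.lift k (fun _ => (0 : k)), by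
    rintro a b ⟨rfl, i, rfl⟩
    simp [lieRel, FreeAlgebra.lift_ι_apply]⟩

/-- The `A`-module `M` has projective dimension at most 2: there is an exact sequence
`0 → P₂ → P₁ → P₀ → M → 0` with all `Pᵢ` projective. -/
def HasProjDimLE2 (A : Type) [Ring A] (M : Type u) [AddCommGroup M] [Module A M] : Prop :=
  ∃ P₂ P₁ P₀ : ModuleCat.{u} A,
    Module.Projective A P₂ ∧ Module.Projective A P₁ ∧ Module.Projective A P₀ ∧
    ∃ (f₂ : P₂ →ₗ[A] P₁) (f₁ : P₁ →ₗ[A] P₀) (f₀ : P₀ →ₗ[A] M),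
      Function.Injective f₂ ∧
      LinearMap.range f₂ = LinearMap.ker f₁ ∧
      LinearMap.range f₁ = LinearMap.ker f₀ ∧
      Function.Surjective f₀

/-- The `A`-module `M` has projective dimension at most 1: there is an exact sequence
`0 → P₁ → P₀ → M → 0` with `P₀, P₁` projective. -/
def HasProjDimLE1 (A : Type) [Ring A] (M : Type u) [AddCommGroup M] [Module A M] : Prop :=
  ∃ P₁ P₀ : ModuleCat.{u} A,
    Module.Projective A P₁ ∧ Module.Projective A P₀ ∧
    ∃ (f₁ : P₁ →ₗ[A] P₀) (f₀ : P₀ →ₗ[A] M),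
      Function.Injective f₁ ∧
      LinearMap.range f₁ = LinearMap.ker f₀ ∧
      Function.Surjective f₀

theorem FreeAlgebra.equivMonoidAlgebraFreeMonoid_ι {R X : Type*} [CommSemiring R] (j : X) :
    equivMonoidAlgebraFreeMonoid (ι R j) = MonoidAlgebra.single (FreeMonoid.of j) 1 := by
  simp [equivMonoidAlgebraFreeMonoid]

theorem RingQuot.mem_of_mkRingHom_eq_zero {A : Type*} [Ring A] {s : A → A → Prop}
    {J : TwoSidedIdeal A} (hs : ∀ ⦃a b⦄, s a b → a - b ∈ J) {t : A}
    (ht : mkRingHom s t = 0) : t ∈ J := by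
  have hJ : ∀ ⦃a b⦄, s a b → J.ringCon.mk' a = J.ringCon.mk' b :=
    fun a b hab => Quotient.sound' ((J.rel_iff a b).2 (hs hab))
  rw [← TwoSidedIdeal.ker_ringCon_mk' J, TwoSidedIdeal.mem_ker,
    ← lift_mkRingHom_apply _ hJ, ht, map_zero]

namespace FreeAlgebra

section Injective

variable {R X : Type*} [CommSemiring R] [Fintype X]

theorem coeff_equivMonoidAlgebraFreeMonoid_sum_ι_mul (q : X → FreeAlgebra R X) (j : X)
    (w : FreeMonoid X) :
    (equivMonoidAlgebraFreeMonoid (∑ j', ι R j' * q j')).coeff (FreeMonoid.of j * w) =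
      (equivMonoidAlgebraFreeMonoid (q j)).coeff w := by
  classical
  simp only [map_sum, map_mul, equivMonoidAlgebraFreeMonoid_ι, MonoidAlgebra.coeff_sum,
    Finset.sum_apply']
  rw [Finset.sum_eq_single j (fun j' _ hj' => ?_) (by simp), MonoidAlgebra.coeff_single_mul_mul,
    one_mul]
  refine MonoidAlgebra.coeff_single_mul_of_forall_mul_ne _ _ fun d hd => hj' ?_
  exact (by simpa using congrArg FreeMonoid.toList hd : j' = j ∧ d = w).1

theorem sum_ι_mul_injective :
    Function.Injective fun q : X → FreeAlgebra R X => ∑ j, ι R j * q j := by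
  intro q q' h
  funext j
  refine equivMonoidAlgebraFreeMonoid.injective (MonoidAlgebra.ext (Finsupp.ext fun w => ?_))
  rw [← coeff_equivMonoidAlgebraFreeMonoid_sum_ι_mul,
    ← coeff_equivMonoidAlgebraFreeMonoid_sum_ι_mul]
  exact congrArg (fun t => (equivMonoidAlgebraFreeMonoid t).coeff (FreeMonoid.of j * w)) h

end Injective

variable {R X κ : Type*} [CommRing R]
  (s : FreeAlgebra R X → FreeAlgebra R X → Prop) (p : κ → X → FreeAlgebra R X)

def rowSpan : Submodule (RingQuot s)ᵐᵒᵖ (X → RingQuot s) :=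
  Submodule.span _ (Set.range fun i j => RingQuot.mkAlgHom R s (p i j))

theorem mem_rowSpan_iff [Fintype κ] (a : X → RingQuot s) :
    a ∈ rowSpan s p ↔
      ∃ b : κ → RingQuot s, ∀ j, a j = ∑ i, RingQuot.mkAlgHom R s (p i j) * b i := by
  rw [rowSpan, Submodule.mem_span_range_iff_exists_fun]
  constructor
  · rintro ⟨c, rfl⟩
    exact ⟨fun i => (c i).unop, fun j => by simp [Finset.sum_apply, MulOpposite.smul_eq_mul_unop]⟩
  · rintro ⟨b, hb⟩
    exact ⟨fun i => .op (b i), funext fun j => by simp [hb j, Finset.sum_apply]⟩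

variable [Fintype X]

def SyzygyRep (t : FreeAlgebra R X) : Prop :=
  RingQuot.mkAlgHom R s t = 0 ∧ ∃ c : X → FreeAlgebra R X,
    t = ∑ j, ι R j * c j ∧ (fun j => RingQuot.mkAlgHom R s (c j)) ∈ rowSpan s p

variable {s p}

theorem syzygyRep_zero : SyzygyRep s p 0 :=
  ⟨map_zero _, 0, by simp, by
    simp only [Pi.zero_apply, map_zero]
    exact zero_mem _⟩

theorem SyzygyRep.add {t t' : FreeAlgebra R X} (h : SyzygyRep s p t) (h' : SyzygyRep s p t') :
    SyzygyRep s p (t + t') := by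
  obtain ⟨hπ, c, rfl, hc⟩ := h
  obtain ⟨hπ', c', rfl, hc'⟩ := h'
  refine ⟨by rw [map_add, hπ, hπ', add_zero], c + c', ?_, ?_⟩
  · simp only [Pi.add_apply, mul_add, Finset.sum_add_distrib]
  · simp only [Pi.add_apply, map_add]
    exact add_mem hc hc'

theorem SyzygyRep.neg {t : FreeAlgebra R X} (h : SyzygyRep s p t) : SyzygyRep s p (-t) := by
  obtain ⟨hπ, c, rfl, hc⟩ := h
  refine ⟨by rw [map_neg, hπ, neg_zero], -c, ?_, ?_⟩
  · simp only [Pi.neg_apply, mul_neg, Finset.sum_neg_distrib]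
  · simp only [Pi.neg_apply, map_neg]
    exact neg_mem hc

theorem SyzygyRep.mul_right {t : FreeAlgebra R X} (h : SyzygyRep s p t) (v : FreeAlgebra R X) :
    SyzygyRep s p (t * v) := by
  obtain ⟨hπ, c, rfl, hc⟩ := h
  refine ⟨by rw [map_mul, hπ, zero_mul], fun j => c j * v, ?_, ?_⟩
  · simp only [Finset.sum_mul, mul_assoc]
  · simp only [map_mul]
    exact (rowSpan s p).smul_mem (MulOpposite.op (RingQuot.mkAlgHom R s v)) hc

theorem SyzygyRep.ι_mul {t : FreeAlgebra R X} (h : SyzygyRep s p t) (m : X) :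
    SyzygyRep s p (ι R m * t) := by
  classical
  refine ⟨by rw [map_mul, h.1, mul_zero], Pi.single m t, by simp [Pi.single_apply], ?_⟩
  convert (rowSpan s p).zero_mem using 1
  funext j
  rcases eq_or_ne j m with rfl | hj
  · simpa using h.1
  · simp [hj]

theorem SyzygyRep.mul_left {t : FreeAlgebra R X} (h : SyzygyRep s p t) (u : FreeAlgebra R X) :
    SyzygyRep s p (u * t) := by
  induction u using FreeAlgebra.induction generalizing t with
  | grade0 r => rw [Algebra.commutes]; exact h.mul_right _
  | grade1 m => exact h.ι_mul m
  | mul u u' hu hu' => rw [mul_assoc]; exact hu (hu' h)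
  | add u u' hu hu' => rw [add_mul]; exact (hu h).add (hu' h)

variable (s p) in
def syzygyIdeal : TwoSidedIdeal (FreeAlgebra R X) :=
  .mk' {t | SyzygyRep s p t} syzygyRep_zero .add .neg (fun h => h.mul_left _)
    (fun h => h.mul_right _)

theorem sub_mem_syzygyIdeal {a b : FreeAlgebra R X} (hab : s a b) (i : κ)
    (hi : a - b = ∑ j, ι R j * p i j) : a - b ∈ syzygyIdeal s p := by
  refine (TwoSidedIdeal.mem_mk' ..).2 ⟨?_, p i, hi, Submodule.subset_span ⟨i, rfl⟩⟩
  rw [map_sub, RingQuot.mkAlgHom_rel R hab, sub_self]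

theorem mem_rowSpan_of_sum_ι_mul_eq_zero
    (hs : ∀ ⦃a b⦄, s a b → ∃ i, a - b = ∑ j, ι R j * p i j)
    (a : X → RingQuot s) (ha : ∑ j, RingQuot.mkAlgHom R s (ι R j) * a j = 0) :
    a ∈ rowSpan s p := by
  obtain ⟨c₀, rfl⟩ := (RingQuot.mkAlgHom_surjective R s).comp_left a
  have hker : ∑ j, ι R j * c₀ j ∈ syzygyIdeal s p := by
    refine RingQuot.mem_of_mkRingHom_eq_zero (s := s) (fun u v huv => ?_) ?_
    · obtain ⟨i, hi⟩ := hs huv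
      exact sub_mem_syzygyIdeal huv i hi
    · rw [← RingQuot.mkAlgHom_coe R]
      simpa only [RingHom.coe_coe, map_sum, map_mul, Function.comp_apply] using ha
  obtain ⟨-, c, hc, hcspan⟩ := (TwoSidedIdeal.mem_mk' ..).1 hker
  rwa [sum_ι_mul_injective hc]

end FreeAlgebra

theorem genIdx_injective (n : ℕ) (i : Fin (n - 2)) : Function.Injective (genIdx n i) :=
  fun s t h => Fin.ext (by simpa [genIdx] using congrArg Fin.val h)

theorem lieRel_eq_sum_ι_mul_pLie (k : Type) [Field k] (n : ℕ) (i : Fin (n - 2)) :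
    lieRel k n i = ∑ j, FreeAlgebra.ι k j * pLie k n i j := by
  rw [← Fintype.sum_of_injective (genIdx n i) (genIdx_injective n i)
    (fun t => FreeAlgebra.ι k (genIdx n i t) * pLie k n i (genIdx n i t)) _ ?_ (fun _ => rfl)]
  · have hne : ∀ s t : Fin 3, s ≠ t → genIdx n i s ≠ genIdx n i t :=
      fun _ _ => (genIdx_injective n i).ne
    simp [Fin.sum_univ_three, pLie, lieRel, hne 1 0 (by decide), hne 2 0 (by decide),
      hne 2 1 (by decide)]
    noncomm_ring
  · intro j hj
    simp only [Set.mem_range, not_exists] at hj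
    simp [pLie, Ne.symm (hj 0), Ne.symm (hj 1), Ne.symm (hj 2)]

theorem An_syzygies_generated_general
    (k : Type) [Field k] (n : ℕ)
    (a : Fin n → AnAlg k n)
    (ha : (∑ j, XbarL k n j * a j) = 0) :
    ∃ b : Fin (n - 2) → AnAlg k n, ∀ j, a j = ∑ i, PbarL k n i j * b i := by
  have hrel : ∀ ⦃u v⦄, lieRelRel k n u v →
      ∃ i, u - v = ∑ j, FreeAlgebra.ι k j * pLie k n i j := by
    rintro u v ⟨rfl, i, rfl⟩
    exact ⟨i, by rw [sub_zero, lieRel_eq_sum_ι_mul_pLie]⟩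
  exact (FreeAlgebra.mem_rowSpan_iff _ _ a).1
    (FreeAlgebra.mem_rowSpan_of_sum_ι_mul_eq_zero hrel a ha)

/-- if `a₁,…,aₙ ∈ Aₙ` satisfy `Σ_j x̄_j a_j = 0`, then there exist
`b₁,…,b_{n-2} ∈ Aₙ` with `a_j = Σ_i p̄_{ij} b_i` for every `j`. -/
theorem An_syzygies_generated
    (k : Type) [Field k] (n : ℕ) (hn : 3 ≤ n)
    (a : Fin n → AnAlg k n)
    (ha : (∑ j, XbarL k n j * a j) = 0) :
    ∃ b : Fin (n - 2) → AnAlg k n, ∀ j, a j = ∑ i, PbarL k n i j * b i :=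
  An_syzygies_generated_general k n a ha

end
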